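/- arXiv:1904.11027 — 7 statements merged into one kernel-verified Lean document; each statement's English description precedes it below -/
import Mathlib

section
/- Let Q be a real symmetric n×n matrix with eigenvalues λ_1 ≥ λ_2 ≥ … ≥ λ_n (listed in decreasing order, with multiplicity). Let H be an n×K matrix with entries in {0,1} such that every row of H sums to 1 and every column of H is nonzero (i.e., H is the partition matrix of a K-way partition of {1,…,n} into nonempty sets). Then the normalized modularity satisfies ∑_{k=1}^K (H_kᵀ Q H_k)/(H_kᵀ H_k) ≤ ∑_{k=1}^K λ_k, where H_k denotes the k-th column of H. -/
open Finset Matrix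

private lemma dot_self_nonneg' {m : ℕ} (v : Fin m → ℝ) : 0 ≤ v ⬝ᵥ v :=
  Finset.sum_nonneg fun _ _ => mul_self_nonneg _

private lemma dotProduct_sum' {m K : ℕ} (e : Fin m → ℝ) (f : Fin K → Fin m → ℝ) :
    e ⬝ᵥ (∑ k, f k) = ∑ k, e ⬝ᵥ f k := by
  simp only [dotProduct, Finset.sum_apply, Finset.mul_sum]
  exact Finset.sum_comm

private lemma sum_dotProduct' {m K : ℕ} (e : Fin m → ℝ) (f : Fin K → Fin m → ℝ) :
    (∑ k, f k) ⬝ᵥ e = ∑ k, f k ⬝ᵥ e := by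
  rw [dotProduct_comm, dotProduct_sum']
  exact Finset.sum_congr rfl fun k _ => dotProduct_comm _ _

private lemma dot_swap' {m : ℕ} (M : Matrix (Fin m) (Fin m) ℝ) (a b : Fin m → ℝ) :
    a ⬝ᵥ (M *ᵥ b) = (Mᵀ *ᵥ a) ⬝ᵥ b := by
  rw [Matrix.dotProduct_mulVec, Matrix.mulVec_transpose]

/-- Bessel-type inequality for a pairwise orthogonal family of nonzero vectors. -/
private lemma bessel_aux {m K : ℕ} (y : Fin K → Fin m → ℝ)
    (horth : ∀ k l, k ≠ l → y k ⬝ᵥ y l = 0)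
    (hpos : ∀ k, 0 < y k ⬝ᵥ y k) (e : Fin m → ℝ) :
    ∑ k, (e ⬝ᵥ y k) ^ 2 / (y k ⬝ᵥ y k) ≤ e ⬝ᵥ e := by
  set c : Fin K → ℝ := fun k => (e ⬝ᵥ y k) / (y k ⬝ᵥ y k) with hc
  set r : Fin m → ℝ := e - ∑ k, c k • y k with hr
  have hNne : ∀ k, y k ⬝ᵥ y k ≠ 0 := fun k => ne_of_gt (hpos k)
  have h1 : e ⬝ᵥ (∑ k, c k • y k) = ∑ k, (e ⬝ᵥ y k) ^ 2 / (y k ⬝ᵥ y k) := by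
    rw [dotProduct_sum']
    refine Finset.sum_congr rfl fun k _ => ?_
    rw [dotProduct_smul, smul_eq_mul, hc]
    field_simp
  have h2 : (∑ k, c k • y k) ⬝ᵥ e = ∑ k, (e ⬝ᵥ y k) ^ 2 / (y k ⬝ᵥ y k) := by
    rw [dotProduct_comm, h1]
  have h3 : (∑ k, c k • y k) ⬝ᵥ (∑ l, c l • y l)
      = ∑ k, (e ⬝ᵥ y k) ^ 2 / (y k ⬝ᵥ y k) := by
    rw [sum_dotProduct']
    refine Finset.sum_congr rfl fun k _ => ?_
    rw [smul_dotProduct, dotProduct_sum']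
    have : ∑ l, (y k ⬝ᵥ c l • y l) = c k * (y k ⬝ᵥ y k) := by
      rw [Finset.sum_eq_single k]
      · rw [dotProduct_smul, smul_eq_mul]
      · intro l _ hlk
        rw [dotProduct_smul, horth k l (Ne.symm hlk), smul_eq_mul, mul_zero]
      · intro h; exact absurd (Finset.mem_univ k) h
    rw [this, smul_eq_mul, hc]
    simp only
    rw [div_mul_cancel₀ _ (hNne k), div_mul_eq_mul_div, ← sq]
  have h0 : (0:ℝ) ≤ r ⬝ᵥ r := dot_self_nonneg' r
  have hexp : r ⬝ᵥ r = e ⬝ᵥ e - ∑ k, (e ⬝ᵥ y k) ^ 2 / (y k ⬝ᵥ y k) := by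
    rw [hr, sub_dotProduct, dotProduct_sub, dotProduct_sub, h1, h2, h3]
    ring
  linarith [hexp ▸ h0]

/-- Majorization: if `0 ≤ d ≤ 1` pointwise and `∑ d = K`, then for antitone `μ`,
`∑ μ i * d i ≤ ∑_{i < K} μ i`. -/
private lemma maj_aux {n K : ℕ} (μ : Fin n → ℝ) (hdec : Antitone μ)
    (d : Fin n → ℝ) (h0 : ∀ i, 0 ≤ d i) (h1 : ∀ i, d i ≤ 1)
    (hsum : ∑ i, d i = K) :
    ∑ i, μ i * d i ≤ ∑ i : Fin n, (if (i : ℕ) < K then μ i else 0) := by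
  rcases Nat.eq_zero_or_pos K with hK0 | hKpos
  · subst hK0
    have hz : ∀ i ∈ Finset.univ, d i = 0 :=
      (Finset.sum_eq_zero_iff_of_nonneg (fun i _ => h0 i)).mp (by simpa using hsum)
    have : ∀ i : Fin n, d i = 0 := fun i => hz i (Finset.mem_univ i)
    simp [this]
  · have hKn : K ≤ n := by
      have hcast : (K : ℝ) ≤ n := by
        rw [← hsum]
        calc ∑ i, d i ≤ ∑ _i : Fin n, (1 : ℝ) := Finset.sum_le_sum fun i _ => h1 i
          _ = n := by simp
      exact_mod_cast hcast
    have hK1 : K - 1 < n := by omega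
    set t := μ ⟨K - 1, hK1⟩ with ht
    have key : ∀ i : Fin n, μ i * d i - (if (i : ℕ) < K then μ i else 0)
        ≤ t * (d i - (if (i : ℕ) < K then (1:ℝ) else 0)) := by
      intro i
      by_cases h : (i : ℕ) < K
      · simp only [if_pos h]
        have hμ : t ≤ μ i := by
          apply hdec
          rw [Fin.le_def]
          simp only
          omega
        nlinarith [h1 i]
      · simp only [if_neg h]
        have hμ : μ i ≤ t := by
          apply hdec
          rw [Fin.le_def]
          simp only
          omega
        nlinarith [h0 i]
    have hcard : (Finset.univ.filter (fun i : Fin n => (i : ℕ) < K)).card = K := by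
      rcases Nat.lt_or_ge K n with h | h
      · have heq : (Finset.univ.filter (fun i : Fin n => (i : ℕ) < K))
            = Finset.Iio (⟨K, h⟩ : Fin n) := by
          ext i; simp [Fin.lt_def]
        rw [heq, Fin.card_Iio]
      · have hKn' : K = n := le_antisymm hKn h
        subst hKn'
        have heq : (Finset.univ.filter (fun i : Fin K => (i : ℕ) < K)) = Finset.univ := by
          ext i; simp [i.isLt]
        rw [heq]; simp
    have hsum2 : ∑ i : Fin n, (if (i : ℕ) < K then (1:ℝ) else 0) = K := by
      rw [Finset.sum_boole, hcard]
    have hA : ∑ i, (μ i * d i - (if (i : ℕ) < K then μ i else 0)) ≤ 0 := by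
      calc ∑ i, (μ i * d i - (if (i : ℕ) < K then μ i else 0))
          ≤ ∑ i, t * (d i - (if (i : ℕ) < K then (1:ℝ) else 0)) :=
            Finset.sum_le_sum fun i _ => key i
        _ = t * ((∑ i, d i) - ∑ i : Fin n, (if (i : ℕ) < K then (1:ℝ) else 0)) := by
            rw [← Finset.mul_sum, Finset.sum_sub_distrib]
        _ = 0 := by rw [hsum, hsum2]; ring
    rw [Finset.sum_sub_distrib] at hA
    linarith

/-- For a real symmetric `n × n` matrix `Q` with eigenvalues
`λ_1 ≥ … ≥ λ_n` and a `K`-way partition matrix `H` (entries in `{0,1}`, row sums `1`,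
nonzero columns), the normalized modularity satisfies
`∑_{k=1}^K (H_kᵀ Q H_k)/(H_kᵀ H_k) ≤ ∑_{k=1}^K λ_k`. -/
theorem gme_normalized_modularity_bound {n K : ℕ}
    (Q : Matrix (Fin n) (Fin n) ℝ) (hQ : Q.IsHermitian)
    (μ : Fin n → ℝ) (hdec : Antitone μ)
    (hperm : ∃ σ : Equiv.Perm (Fin n), ∀ i, μ i = hQ.eigenvalues (σ i))
    (H : Matrix (Fin n) (Fin K) ℝ)
    (hbin : ∀ u k, H u k = 0 ∨ H u k = 1)
    (hrow : ∀ u : Fin n, ∑ k : Fin K, H u k = 1)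
    (hcol : ∀ k : Fin K, ∃ u : Fin n, H u k ≠ 0) :
    ∑ k : Fin K,
        ((fun u => H u k) ⬝ᵥ (Q *ᵥ fun u => H u k)) / ((fun u => H u k) ⬝ᵥ fun u => H u k)
      ≤ ∑ i : Fin n, (if (i : ℕ) < K then μ i else 0) := by
  classical
  obtain ⟨σ, hσ⟩ := hperm
  set U : Matrix (Fin n) (Fin n) ℝ := (hQ.eigenvectorUnitary : Matrix (Fin n) (Fin n) ℝ) with hU
  set ev : Fin n → ℝ := hQ.eigenvalues with hev
  have hstar : star U = Uᵀ := by
    rw [Matrix.star_eq_conjTranspose, conjTranspose_eq_transpose_of_trivial]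
  have hUUt : U * Uᵀ = 1 := by
    rw [← hstar]; exact (Matrix.mem_unitaryGroup_iff).mp hQ.eigenvectorUnitary.2
  -- transposing preserves dot products
  have hpars : ∀ a b : Fin n → ℝ, (Uᵀ *ᵥ a) ⬝ᵥ (Uᵀ *ᵥ b) = a ⬝ᵥ b := by
    intro a b
    rw [dot_swap', transpose_transpose, mulVec_mulVec, hUUt, one_mulVec]
  -- Rayleigh numerator in eigencoordinates
  have hdiag : Q = U * diagonal ev * Uᵀ := by
    rw [← hstar]
    have := hQ.spectral_theorem
    simpa [RCLike.ofReal_real_eq_id] using this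
  have hray : ∀ a : Fin n → ℝ, a ⬝ᵥ (Q *ᵥ a) = ∑ i, ev i * ((Uᵀ *ᵥ a) i) ^ 2 := by
    intro a
    rw [hdiag, ← mulVec_mulVec, ← mulVec_mulVec, dot_swap']
    simp only [dotProduct, mulVec_diagonal]
    exact Finset.sum_congr rfl fun i _ => by ring
  -- column vectors
  set v : Fin K → Fin n → ℝ := fun k u => H u k with hv
  set y : Fin K → Fin n → ℝ := fun k => Uᵀ *ᵥ v k with hy
  have hvnn : ∀ k, 0 < v k ⬝ᵥ v k := by
    intro k
    obtain ⟨u₀, hu₀⟩ := hcol k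
    have h1 : H u₀ k = 1 := (hbin u₀ k).resolve_left hu₀
    apply Finset.sum_pos' (fun u _ => mul_self_nonneg _)
    exact ⟨u₀, Finset.mem_univ u₀, by simp [hv, h1]⟩
  have horthv : ∀ k l, k ≠ l → v k ⬝ᵥ v l = 0 := by
    intro k l hkl
    apply Finset.sum_eq_zero
    intro u _
    rcases hbin u k with h | h
    · simp [hv, h]
    rcases hbin u l with h' | h'
    · simp [hv, h']
    exfalso
    have hle : H u k + H u l ≤ ∑ k' : Fin K, H u k' := by
      have : ∑ k' ∈ ({k, l} : Finset (Fin K)), H u k' = H u k + H u l :=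
        Finset.sum_pair hkl
      rw [← this]
      apply Finset.sum_le_sum_of_subset_of_nonneg (Finset.subset_univ _)
      intro j _ _
      rcases hbin u j with h'' | h'' <;> simp [h'']
    rw [hrow u, h, h'] at hle
    norm_num at hle
  have horthy : ∀ k l, k ≠ l → y k ⬝ᵥ y l = 0 := fun k l hkl => by
    rw [hy]; simp only; rw [hpars]; exact horthv k l hkl
  have hypos : ∀ k, 0 < y k ⬝ᵥ y k := fun k => by
    rw [hy]; simp only; rw [hpars]; exact hvnn k
  -- quotient sums
  set d : Fin n → ℝ := fun j => ∑ k, (y k (σ j)) ^ 2 / (v k ⬝ᵥ v k) with hd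
  have hd0 : ∀ j, 0 ≤ d j := fun j =>
    Finset.sum_nonneg fun k _ => div_nonneg (sq_nonneg _) (le_of_lt (hvnn k))
  have hd1 : ∀ j, d j ≤ 1 := by
    intro j
    have hb := bessel_aux y horthy hypos (Pi.single (σ j) 1)
    have he : (Pi.single (σ j) 1 : Fin n → ℝ) ⬝ᵥ Pi.single (σ j) 1 = 1 := by
      rw [single_dotProduct]; simp
    have heq : ∀ k, (Pi.single (σ j) 1 : Fin n → ℝ) ⬝ᵥ y k = y k (σ j) := by
      intro k; rw [single_dotProduct, one_mul]
    calc d j = ∑ k, ((Pi.single (σ j) 1 : Fin n → ℝ) ⬝ᵥ y k) ^ 2 / (y k ⬝ᵥ y k) := by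
          refine Finset.sum_congr rfl fun k _ => ?_
          rw [heq k]
          congr 1
          rw [hy]; simp only; rw [hpars]
      _ ≤ 1 := by rw [he] at hb; exact hb
  have hdsum : ∑ j, d j = K := by
    rw [Finset.sum_comm]
    have : ∀ k : Fin K, ∑ j, (y k (σ j)) ^ 2 / (v k ⬝ᵥ v k) = 1 := by
      intro k
      rw [← Finset.sum_div]
      rw [Equiv.sum_comp σ (fun i => (y k i) ^ 2)]
      have hyy : ∑ i, (y k i) ^ 2 = v k ⬝ᵥ v k := by
        rw [← hpars (v k) (v k)]
        simp only [dotProduct, hy]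
        exact Finset.sum_congr rfl fun i _ => by ring
      rw [hyy, div_self (ne_of_gt (hvnn k))]
    rw [Finset.sum_congr rfl fun k _ => this k]
    simp
  -- rewrite LHS
  have hLHS : ∑ k : Fin K,
      ((fun u => H u k) ⬝ᵥ (Q *ᵥ fun u => H u k)) / ((fun u => H u k) ⬝ᵥ fun u => H u k)
      = ∑ j, μ j * d j := by
    have step1 : ∀ k : Fin K,
        ((fun u => H u k) ⬝ᵥ (Q *ᵥ fun u => H u k)) / ((fun u => H u k) ⬝ᵥ fun u => H u k)
        = ∑ i, ev i * (y k i) ^ 2 / (v k ⬝ᵥ v k) := by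
      intro k
      rw [← Finset.sum_div]
      congr 1
      exact hray (v k)
    rw [Finset.sum_congr rfl fun k _ => step1 k, Finset.sum_comm]
    rw [← Equiv.sum_comp σ (fun i => ∑ k, ev i * (y k i) ^ 2 / (v k ⬝ᵥ v k))]
    refine Finset.sum_congr rfl fun j _ => ?_
    rw [hσ j, hd, Finset.mul_sum]
    exact Finset.sum_congr rfl fun k _ => by rw [mul_div_assoc]
  rw [hLHS]
  exact maj_aux μ hdec d hd0 hd1 hdsum
end

section
/- Let d : Ω × Ω → ℝ be a semi-metric on a finite set Ω of n points, i.e., d satisfies (D1) d(u,w) ≥ 0, (D2) d(u,u) = 0, and (D3) d(u,w) = d(w,u) for all u,w. Define the induced semi-cohesion measure γ(u,w) = (1/n)∑_{u₂∈Ω} d(u₂,w) + (1/n)∑_{u₁∈Ω} d(u,u₁) − (1/n²)∑_{u₂∈Ω}∑_{u₁∈Ω} d(u₂,u₁) − d(u,w). Then γ satisfies: (C1) γ(u,w) = γ(w,u) for all u,w; (C2) ∑_{w∈Ω} γ(u,w) = 0 for every u; and (C3) γ(u,u) + γ(w,w) ≥ 2γ(u,w) for all u,w. -/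
open Finset

/-!
Up to sign, `γ` is the double centering of `d`: subtracting row and column means and adding back
the grand mean. Centering kills row sums, symmetry of `d` makes row and column means agree, and
then `γ(u,u) + γ(w,w) - 2γ(u,w)` collapses to `2 d(u,w) - d(u,u) - d(w,w) = 2 d(u,w) ≥ 0`.
-/

section InducedCohesion

variable {Ω : Type*} [Fintype Ω]

noncomputable def inducedCohesion (d : Ω → Ω → ℝ) (u w : Ω) : ℝ :=
  (1 / (Fintype.card Ω : ℝ)) * ∑ u₂ : Ω, d u₂ w
    + (1 / (Fintype.card Ω : ℝ)) * ∑ u₁ : Ω, d u u₁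
    - (1 / (Fintype.card Ω : ℝ)) ^ 2 * ∑ u₂ : Ω, ∑ u₁ : Ω, d u₂ u₁
    - d u w

lemma sum_inducedCohesion_right (d : Ω → Ω → ℝ) (u : Ω) :
    ∑ w : Ω, inducedCohesion d u w = 0 := by
  have hn : (Fintype.card Ω : ℝ) ≠ 0 := by
    have : Nonempty Ω := ⟨u⟩
    exact Nat.cast_ne_zero.mpr Fintype.card_ne_zero
  simp only [inducedCohesion, sum_sub_distrib, sum_add_distrib, ← mul_sum, sum_const,
    card_univ, nsmul_eq_mul]
  rw [sum_comm (f := fun w u₂ => d u₂ w)]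
  field_simp
  ring

variable {d : Ω → Ω → ℝ}

lemma sum_col_eq_sum_row_of_symm (hsymm : ∀ u w, d u w = d w u) (w : Ω) :
    ∑ u : Ω, d u w = ∑ u : Ω, d w u :=
  sum_congr rfl fun u _ => hsymm u w

lemma inducedCohesion_comm (hsymm : ∀ u w, d u w = d w u) (u w : Ω) :
    inducedCohesion d u w = inducedCohesion d w u := by
  simp only [inducedCohesion, sum_col_eq_sum_row_of_symm hsymm, hsymm u w]
  ring

lemma inducedCohesion_add_sub_two_mul (hsymm : ∀ u w, d u w = d w u) (u w : Ω) :
    inducedCohesion d u u + inducedCohesion d w w - 2 * inducedCohesion d u w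
      = 2 * d u w - d u u - d w w := by
  simp only [inducedCohesion, sum_col_eq_sum_row_of_symm hsymm]
  ring

end InducedCohesion

/-- A semi-metric `d` on a finite set `Ω` of `n` points induces a
semi-cohesion measure
`γ(u,w) = (1/n)∑_{u₂} d(u₂,w) + (1/n)∑_{u₁} d(u,u₁) − (1/n²)∑_{u₂}∑_{u₁} d(u₂,u₁) − d(u,w)`
satisfying symmetry, zero row sums, and `γ(u,u)+γ(w,w) ≥ 2γ(u,w)`. -/
theorem gme_semimetric_induces_semicohesion {Ω : Type*} [Fintype Ω]
    (d : Ω → Ω → ℝ)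
    (hnonneg : ∀ u w, 0 ≤ d u w)
    (hnull : ∀ u, d u u = 0)
    (hsymm : ∀ u w, d u w = d w u)
    (γ : Ω → Ω → ℝ)
    (hγ : ∀ u w, γ u w =
      (1 / (Fintype.card Ω : ℝ)) * ∑ u₂ : Ω, d u₂ w
      + (1 / (Fintype.card Ω : ℝ)) * ∑ u₁ : Ω, d u u₁
      - (1 / (Fintype.card Ω : ℝ)) ^ 2 * ∑ u₂ : Ω, ∑ u₁ : Ω, d u₂ u₁
      - d u w) :
    (∀ u w, γ u w = γ w u) ∧
    (∀ u, ∑ w : Ω, γ u w = 0) ∧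
    (∀ u w, 2 * γ u w ≤ γ u u + γ w w) := by
  obtain rfl : γ = inducedCohesion d := funext fun u => funext (hγ u)
  refine ⟨inducedCohesion_comm hsymm, sum_inducedCohesion_right d, fun u w => ?_⟩
  have hgap := inducedCohesion_add_sub_two_mul hsymm u w
  rw [hnull, hnull] at hgap
  linarith [hnonneg u w]
end

section
/- Let d : Ω × Ω → ℝ be a semi-metric on a finite set Ω of n points (d(u,w) ≥ 0, d(u,u) = 0, d(u,w) = d(w,u)), and let γ be the semi-cohesion measure induced by d, namely γ(u,w) = (1/n)∑_{u₂∈Ω} d(u₂,w) + (1/n)∑_{u₁∈Ω} d(u,u₁) − (1/n²)∑_{u₂∈Ω}∑_{u₁∈Ω} d(u₂,u₁) − d(u,w). Then the semi-metric induced back from γ recovers d: for all u,w, (γ(u,u) + γ(w,w))/2 − γ(u,w) = d(u,w). Thus the correspondence between semi-metrics and their induced semi-cohesion measures is a one-to-one mapping on semi-metrics. -/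
open Finset

theorem gme_semimetric_duality_general {Ω : Type*} [Fintype Ω]
    (d : Ω → Ω → ℝ)
    (hnull : ∀ u, d u u = 0)
    (hsymm : ∀ u w, d u w = d w u)
    (γ : Ω → Ω → ℝ)
    (hγ : ∀ u w, γ u w =
      (1 / (Fintype.card Ω : ℝ)) * ∑ u₂ : Ω, d u₂ w
      + (1 / (Fintype.card Ω : ℝ)) * ∑ u₁ : Ω, d u u₁
      - (1 / (Fintype.card Ω : ℝ)) ^ 2 * ∑ u₂ : Ω, ∑ u₁ : Ω, d u₂ u₁
      - d u w) :
    ∀ u w, (γ u u + γ w w) / 2 - γ u w = d u w := by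
  intro u w
  have column_sum_eq_row_sum : ∀ x, ∑ y, d y x = ∑ y, d x y :=
    fun x => sum_congr rfl fun y _ => hsymm y x
  simp only [hγ, hnull, column_sum_eq_row_sum]
  ring

/-- If `γ` is the semi-cohesion measure induced by a semi-metric `d` on a
finite set `Ω` of `n` points, then the semi-metric induced back from `γ` recovers `d`:
`(γ(u,u)+γ(w,w))/2 − γ(u,w) = d(u,w)` for all `u, w`. -/
theorem gme_semimetric_duality {Ω : Type*} [Fintype Ω]
    (d : Ω → Ω → ℝ)
    (hnonneg : ∀ u w, 0 ≤ d u w)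
    (hnull : ∀ u, d u u = 0)
    (hsymm : ∀ u w, d u w = d w u)
    (γ : Ω → Ω → ℝ)
    (hγ : ∀ u w, γ u w =
      (1 / (Fintype.card Ω : ℝ)) * ∑ u₂ : Ω, d u₂ w
      + (1 / (Fintype.card Ω : ℝ)) * ∑ u₁ : Ω, d u u₁
      - (1 / (Fintype.card Ω : ℝ)) ^ 2 * ∑ u₂ : Ω, ∑ u₁ : Ω, d u₂ u₁
      - d u w) :
    ∀ u w, (γ u u + γ w w) / 2 - γ u w = d u w :=
  gme_semimetric_duality_general d hnull hsymm γ hγ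
end

section
/- Let x_1, …, x_n be points in the Euclidean space ℝ^p and let d(u,w) = (1/2)‖x_u − x_w‖² be one-half the squared Euclidean distance between x_u and x_w. Let γ be the semi-cohesion measure induced by d, namely γ(u,w) = (1/n)∑_{u₂=1}^n d(u₂,w) + (1/n)∑_{u₁=1}^n d(u,u₁) − (1/n²)∑_{u₂=1}^n∑_{u₁=1}^n d(u₂,u₁) − d(u,w). Then γ(u,w) = ⟨x_u − c, x_w − c⟩ for all u,w, where c = (1/n)∑_{v=1}^n x_v is the centroid of the dataset and ⟨·,·⟩ is the Euclidean inner product. -/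
open Finset
open scoped RealInnerProductSpace

/-!
Half the squared distance is unchanged by translating all points by the centroid `c`, so we may
assume the points `y_v = x_v - c` sum to zero. Then all cross terms in the averages vanish:
`(1/n) ∑ᵢ ½‖y_i - z‖² = S + ½‖z‖²` with `S = (1/n) ∑ᵢ ½‖y_i‖²`, the double average is `2S`, and
subtracting `½‖y_u - y_w‖² = ½‖y_u‖² + ½‖y_w‖² - ⟪y_u, y_w⟫` leaves exactly `⟪y_u, y_w⟫`.
-/

section SemiCohesion

variable {ι E : Type*} [Fintype ι] [NormedAddCommGroup E] [InnerProductSpace ℝ E]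

noncomputable def semiCohesion (d : ι → ι → ℝ) (u w : ι) : ℝ :=
  (1 / (Fintype.card ι : ℝ)) * ∑ u₂, d u₂ w
    + (1 / (Fintype.card ι : ℝ)) * ∑ u₁, d u u₁
    - (1 / (Fintype.card ι : ℝ)) ^ 2 * ∑ u₂, ∑ u₁, d u₂ u₁
    - d u w

theorem sum_sub_centroid_eq_zero [Nonempty ι] (x : ι → E) :
    ∑ i, (x i - (1 / (Fintype.card ι : ℝ)) • ∑ j, x j) = 0 := by
  have hn : (Fintype.card ι : ℝ) ≠ 0 := by positivity
  rw [sum_sub_distrib, sum_const, card_univ, ← Nat.cast_smul_eq_nsmul ℝ, smul_smul,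
    mul_one_div_cancel hn, one_smul, sub_self]

theorem sum_norm_sub_sq_of_sum_eq_zero {y : ι → E} (hy : ∑ i, y i = 0) (z : E) :
    ∑ i, ‖y i - z‖ ^ 2 = ∑ i, ‖y i‖ ^ 2 + Fintype.card ι * ‖z‖ ^ 2 := by
  simp only [norm_sub_sq_real, sum_add_distrib, sum_sub_distrib, ← mul_sum, ← sum_inner, hy,
    inner_zero_left, sum_const, card_univ, nsmul_eq_mul]
  ring

theorem semiCohesion_half_norm_sub_sq_of_sum_eq_zero {y : ι → E} (hy : ∑ i, y i = 0) (u w : ι) :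
    semiCohesion (fun i j ↦ (1 / 2) * ‖y i - y j‖ ^ 2) u w = ⟪y u, y w⟫ := by
  have : Nonempty ι := ⟨u⟩
  have hn : (Fintype.card ι : ℝ) ≠ 0 := by positivity
  have hrow (z : E) : ∑ i, (1 / 2) * ‖z - y i‖ ^ 2
      = (1 / 2) * (∑ i, ‖y i‖ ^ 2 + Fintype.card ι * ‖z‖ ^ 2) := by
    simp only [norm_sub_rev z, ← mul_sum, sum_norm_sub_sq_of_sum_eq_zero hy]
  have hcol (z : E) : ∑ i, (1 / 2) * ‖y i - z‖ ^ 2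
      = (1 / 2) * (∑ i, ‖y i‖ ^ 2 + Fintype.card ι * ‖z‖ ^ 2) := by
    rw [← mul_sum, sum_norm_sub_sq_of_sum_eq_zero hy]
  simp only [semiCohesion, hrow, hcol, mul_add, sum_add_distrib, sum_const, card_univ,
    nsmul_eq_mul, ← mul_sum]
  rw [norm_sub_sq_real]
  field_simp
  ring

end SemiCohesion

/-- For points `x_1,…,x_n ∈ ℝ^p` and `d(u,w) = ½‖x_u − x_w‖²`, the induced
semi-cohesion measure satisfies `γ(u,w) = ⟨x_u − c, x_w − c⟩` where `c` is the centroid. -/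
theorem gme_cohesion_is_centered_inner {n p : ℕ}
    (x : Fin n → EuclideanSpace ℝ (Fin p))
    (d : Fin n → Fin n → ℝ)
    (hd : ∀ u w, d u w = (1 / 2) * ‖x u - x w‖ ^ 2)
    (γ : Fin n → Fin n → ℝ)
    (hγ : ∀ u w, γ u w =
      (1 / (n : ℝ)) * ∑ u₂ : Fin n, d u₂ w
      + (1 / (n : ℝ)) * ∑ u₁ : Fin n, d u u₁
      - (1 / (n : ℝ)) ^ 2 * ∑ u₂ : Fin n, ∑ u₁ : Fin n, d u₂ u₁
      - d u w)
    (c : EuclideanSpace ℝ (Fin p))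
    (hc : c = (1 / (n : ℝ)) • ∑ v : Fin n, x v) :
    ∀ u w, γ u w = ⟪x u - c, x w - c⟫ := by
  intro u w
  have : Nonempty (Fin n) := ⟨u⟩
  have hcentered : ∑ v, (x v - c) = 0 := by
    simpa only [hc, Fintype.card_fin] using sum_sub_centroid_eq_zero x
  have hd_centered : d = fun i j ↦ (1 / 2) * ‖(x i - c) - (x j - c)‖ ^ 2 := by
    ext i j
    rw [hd, sub_sub_sub_cancel_right]
  have hγ_eq : γ u w = semiCohesion d u w := by
    rw [hγ, semiCohesion, Fintype.card_fin]
  rw [hγ_eq, hd_centered, semiCohesion_half_norm_sub_sq_of_sum_eq_zero hcentered]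
end

section
/- Let x_1, …, x_n be points in ℝ^p, let d(u,w) = (1/2)‖x_u − x_w‖², and let γ be the semi-cohesion measure induced by d, namely γ(u,w) = (1/n)∑_{u₂=1}^n d(u₂,w) + (1/n)∑_{u₁=1}^n d(u,u₁) − (1/n²)∑_{u₂=1}^n∑_{u₁=1}^n d(u₂,u₁) − d(u,w). Then the n×n semi-cohesion matrix Γ = (γ(u,w)) is positive semi-definite. -/
open Finset Matrix

lemma gme_expand_sum {n : ℕ} (g : Fin n → ℝ) (c : ℝ) :
    ∑ v : Fin n, ((1 / 2) * (g v) ^ 2 - c * g v + (1 / 2) * c ^ 2)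
    = (1 / 2) * ∑ v : Fin n, (g v) ^ 2 - c * ∑ v : Fin n, g v + (n : ℝ) * ((1 / 2) * c ^ 2) := by
  rw [Finset.sum_add_distrib, Finset.sum_sub_distrib, ← Finset.mul_sum, ← Finset.mul_sum,
    Finset.sum_const, Finset.card_univ, Fintype.card_fin, nsmul_eq_mul]

lemma gme_aux {n : ℕ} (hn : (n : ℝ) ≠ 0) (f : Fin n → ℝ) (a b : ℝ) :
    (1 / (n : ℝ)) * ∑ v : Fin n, (1 / 2) * (f v - b) ^ 2
    + (1 / (n : ℝ)) * ∑ v : Fin n, (1 / 2) * (a - f v) ^ 2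
    - (1 / (n : ℝ)) ^ 2 * ∑ v : Fin n, ∑ w : Fin n, (1 / 2) * (f v - f w) ^ 2
    - (1 / 2) * (a - b) ^ 2
    = (a - (n : ℝ)⁻¹ * ∑ v : Fin n, f v) * (b - (n : ℝ)⁻¹ * ∑ v : Fin n, f v) := by
  have h1 : ∑ v : Fin n, (1 / 2) * (f v - b) ^ 2
      = (1 / 2) * ∑ v : Fin n, (f v) ^ 2 - b * ∑ v : Fin n, f v + (n : ℝ) * ((1 / 2) * b ^ 2) :=
    (Finset.sum_congr rfl fun v _ => by ring).trans (gme_expand_sum f b)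
  have h2 : ∑ v : Fin n, (1 / 2) * (a - f v) ^ 2
      = (1 / 2) * ∑ v : Fin n, (f v) ^ 2 - a * ∑ v : Fin n, f v + (n : ℝ) * ((1 / 2) * a ^ 2) :=
    (Finset.sum_congr rfl fun v _ => by ring).trans (gme_expand_sum f a)
  have h3 : ∑ v : Fin n, ∑ w : Fin n, (1 / 2) * (f v - f w) ^ 2
      = (n : ℝ) * ∑ v : Fin n, (f v) ^ 2 - (∑ v : Fin n, f v) ^ 2 := by
    have hrow : ∀ v : Fin n, ∑ w : Fin n, (1 / 2) * (f v - f w) ^ 2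
        = (1 / 2) * ∑ w : Fin n, (f w) ^ 2 - f v * ∑ w : Fin n, f w
          + (n : ℝ) * ((1 / 2) * (f v) ^ 2) := fun v =>
      (Finset.sum_congr rfl fun w _ => by ring).trans (gme_expand_sum f (f v))
    rw [Finset.sum_congr rfl (fun v _ => hrow v), Finset.sum_add_distrib,
      Finset.sum_sub_distrib, Finset.sum_const, Finset.card_univ, Fintype.card_fin,
      nsmul_eq_mul, ← Finset.sum_mul, ← Finset.mul_sum, ← Finset.mul_sum]
    ring
  rw [h1, h2, h3]
  field_simp
  ring

/-- For points `x_1,…,x_n ∈ ℝ^p` and `d(u,w) = ½‖x_u − x_w‖²`, the `n × n`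
semi-cohesion matrix `Γ = (γ(u,w))` induced by `d` is positive semi-definite. -/
theorem gme_cohesion_matrix_posSemidef {n p : ℕ}
    (x : Fin n → EuclideanSpace ℝ (Fin p))
    (d : Fin n → Fin n → ℝ)
    (hd : ∀ u w, d u w = (1 / 2) * ‖x u - x w‖ ^ 2)
    (γ : Fin n → Fin n → ℝ)
    (hγ : ∀ u w, γ u w =
      (1 / (n : ℝ)) * ∑ u₂ : Fin n, d u₂ w
      + (1 / (n : ℝ)) * ∑ u₁ : Fin n, d u u₁
      - (1 / (n : ℝ)) ^ 2 * ∑ u₂ : Fin n, ∑ u₁ : Fin n, d u₂ u₁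
      - d u w) :
    (Matrix.of γ).PosSemidef := by
  set B : Matrix (Fin p) (Fin n) ℝ :=
    Matrix.of (fun i u => x u i - (n : ℝ)⁻¹ * ∑ v : Fin n, x v i) with hB
  have hdcoord : ∀ u w, d u w = ∑ i : Fin p, (1 / 2) * (x u i - x w i) ^ 2 := by
    intro u w
    rw [hd, ← real_inner_self_eq_norm_sq, PiLp.inner_apply, Finset.mul_sum]
    refine Finset.sum_congr rfl fun i _ => ?_
    simp [RCLike.inner_apply]
  have key : Matrix.of γ = Bᴴ * B := by
    ext u w
    have hn : (n : ℝ) ≠ 0 := by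
      have : 0 < n := Fin.pos u
      exact_mod_cast this.ne'
    simp only [Matrix.mul_apply, Matrix.conjTranspose_apply, hB, Matrix.of_apply,
      star_trivial]
    rw [hγ]
    simp only [hdcoord]
    have e1 : (1 / (n : ℝ)) * ∑ u₂ : Fin n, ∑ i : Fin p, (1 / 2) * (x u₂ i - x w i) ^ 2
        = ∑ i : Fin p, (1 / (n : ℝ)) * ∑ u₂ : Fin n, (1 / 2) * (x u₂ i - x w i) ^ 2 := by
      rw [Finset.sum_comm, Finset.mul_sum]
    have e2 : (1 / (n : ℝ)) * ∑ u₁ : Fin n, ∑ i : Fin p, (1 / 2) * (x u i - x u₁ i) ^ 2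
        = ∑ i : Fin p, (1 / (n : ℝ)) * ∑ u₁ : Fin n, (1 / 2) * (x u i - x u₁ i) ^ 2 := by
      rw [Finset.sum_comm, Finset.mul_sum]
    have e3 : (1 / (n : ℝ)) ^ 2
          * ∑ u₂ : Fin n, ∑ u₁ : Fin n, ∑ i : Fin p, (1 / 2) * (x u₂ i - x u₁ i) ^ 2
        = ∑ i : Fin p, (1 / (n : ℝ)) ^ 2
          * ∑ u₂ : Fin n, ∑ u₁ : Fin n, (1 / 2) * (x u₂ i - x u₁ i) ^ 2 := by
      rw [show (∑ u₂ : Fin n, ∑ u₁ : Fin n, ∑ i : Fin p, (1 / 2) * (x u₂ i - x u₁ i) ^ 2)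
          = ∑ i : Fin p, ∑ u₂ : Fin n, ∑ u₁ : Fin n, (1 / 2) * (x u₂ i - x u₁ i) ^ 2 from
        (Finset.sum_congr rfl fun _ _ => Finset.sum_comm).trans
          (Finset.sum_comm), Finset.mul_sum]
    rw [e1, e2, e3, ← Finset.sum_add_distrib, ← Finset.sum_sub_distrib,
      ← Finset.sum_sub_distrib]
    exact Finset.sum_congr rfl fun i _ => gme_aux hn (fun v => x v i) (x u i) (x w i)
  rw [key]
  exact Matrix.posSemidef_conjTranspose_mul_self B
end

section
/- Let d : {1,…,n} × {1,…,n} → ℝ be a semi-metric (d(u,w) ≥ 0, d(u,u) = 0, d(u,w) = d(w,u)). For θ ∈ ℝ define the bivariate distribution p_θ(u,w) = exp(θ·d(u,w)) / ∑_{u₁=1}^n ∑_{u₂=1}^n exp(θ·d(u₁,u₂)), its marginals p_{U,θ}(u) = ∑_w p_θ(u,w) and p_{W,θ}(w) = ∑_u p_θ(u,w), and the covariance q_θ(u,w) = p_θ(u,w) − p_{U,θ}(u)·p_{W,θ}(w). Then for each fixed pair (u,w), the function θ ↦ q_θ(u,w) satisfies q_0(u,w) = 0 and has derivative at θ = 0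 equal to −γ(u,w)/n², where γ(u,w) = (1/n)∑_{u₂} d(u₂,w) + (1/n)∑_{u₁} d(u,u₁) − (1/n²)∑_{u₂}∑_{u₁} d(u₂,u₁) − d(u,w) is the semi-cohesion measure induced by d. In particular, for small negative θ the covariance q_θ(u,w) is, to first order in θ, a positive multiple of γ(u,w). -/
/-!
At `θ = 0` the exponential sampling is the uniform distribution, a product of its marginals, so
the covariance vanishes. Differentiating `exp (θ d) / ∑ exp (θ d)` at `0` gives `(d - d̄) / N`, where `d̄`
is the mean of `d` and `N` the number of pairs, and the product rule for `p - p_U p_W` then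
assembles the row mean, the column mean and `d̄` into the semi-cohesion `γ`.
-/

open Finset

section

variable {α β : Type*} [Fintype α] [Fintype β]

noncomputable def expSampling (d : α → β → ℝ) (θ : ℝ) (a : α) (b : β) : ℝ :=
  Real.exp (θ * d a b) / ∑ a₁ : α, ∑ b₁ : β, Real.exp (θ * d a₁ b₁)

def bivariateCovariance (p : α → β → ℝ) (a : α) (b : β) : ℝ :=
  p a b - (∑ b₁, p a b₁) * ∑ a₁, p a₁ b

theorem bivariateCovariance_mul {f : α → ℝ} {g : β → ℝ} (hf : ∑ a, f a = 1)
    (hg : ∑ b, g b = 1) (a : α) (b : β) :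
    bivariateCovariance (fun a b => f a * g b) a b = 0 := by
  simp [bivariateCovariance, ← mul_sum, ← sum_mul, hf, hg]

theorem HasDerivAt.bivariateCovariance {P : ℝ → α → β → ℝ} {P' : α → β → ℝ} {x : ℝ}
    (hP : ∀ a b, HasDerivAt (fun θ => P θ a b) (P' a b) x) (a : α) (b : β) :
    HasDerivAt (fun θ => _root_.bivariateCovariance (P θ) a b)
      (P' a b - ((∑ b₁, P' a b₁) * ∑ a₁, P x a₁ b + (∑ b₁, P x a b₁) * ∑ a₁, P' a₁ b)) x :=
  (hP a b).sub <| (HasDerivAt.fun_sum fun b₁ _ => hP a b₁).mul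
    (HasDerivAt.fun_sum fun a₁ _ => hP a₁ b)

theorem expSampling_zero (d : α → β → ℝ) (a : α) (b : β) :
    expSampling d 0 a b = (Fintype.card α : ℝ)⁻¹ * (Fintype.card β : ℝ)⁻¹ := by
  simp only [expSampling, zero_mul, Real.exp_zero, sum_const, card_univ, nsmul_eq_mul, mul_one]
  ring

theorem bivariateCovariance_expSampling_zero (d : α → β → ℝ) (a : α) (b : β) :
    bivariateCovariance (expSampling d 0) a b = 0 := by
  have : Nonempty α := ⟨a⟩
  have : Nonempty β := ⟨b⟩
  rw [funext₂ (expSampling_zero d)]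
  exact bivariateCovariance_mul (by simp) (by simp) a b

theorem hasDerivAt_exp_mul_const_zero (c : ℝ) :
    HasDerivAt (fun θ : ℝ => Real.exp (θ * c)) c 0 := by
  simpa using ((hasDerivAt_id (0 : ℝ)).mul_const c).exp

theorem hasDerivAt_expSampling_zero (d : α → β → ℝ) (a : α) (b : β) :
    HasDerivAt (fun θ => expSampling d θ a b)
      ((d a b - (∑ a₁, ∑ b₁, d a₁ b₁) / (Fintype.card α * Fintype.card β))
        / (Fintype.card α * Fintype.card β)) 0 := by
  have : Nonempty α := ⟨a⟩
  have : Nonempty β := ⟨b⟩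
  have hZ : ∑ a₁ : α, ∑ b₁ : β, Real.exp (0 * d a₁ b₁) = Fintype.card α * Fintype.card β := by
    simp
  refine ((hasDerivAt_exp_mul_const_zero (d a b)).div
    (HasDerivAt.fun_sum fun a₁ _ => HasDerivAt.fun_sum fun b₁ _ =>
      hasDerivAt_exp_mul_const_zero (d a₁ b₁)) (by rw [hZ]; positivity)).congr_deriv ?_
  rw [hZ]
  field_simp
  simp

theorem hasDerivAt_bivariateCovariance_expSampling_zero (d : α → β → ℝ) (a : α) (b : β) :
    HasDerivAt (fun θ => bivariateCovariance (expSampling d θ) a b)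
      (-((∑ b₁, d a b₁) / Fintype.card β + (∑ a₁, d a₁ b) / Fintype.card α
          - (∑ a₁, ∑ b₁, d a₁ b₁) / (Fintype.card α * Fintype.card β) - d a b)
        / (Fintype.card α * Fintype.card β)) 0 := by
  have : Nonempty α := ⟨a⟩
  have : Nonempty β := ⟨b⟩
  refine (HasDerivAt.bivariateCovariance (hasDerivAt_expSampling_zero d) a b).congr_deriv ?_
  simp only [expSampling_zero, ← sum_div, sum_sub_distrib, sum_const, card_univ, nsmul_eq_mul]
  field_simp
  ring

end

theorem gme_exponential_sampling_derivative_general {n : ℕ}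
    (d : Fin n → Fin n → ℝ)
    (p : ℝ → Fin n → Fin n → ℝ)
    (hp : ∀ θ u w, p θ u w =
      Real.exp (θ * d u w) / ∑ u₁ : Fin n, ∑ u₂ : Fin n, Real.exp (θ * d u₁ u₂))
    (q : ℝ → Fin n → Fin n → ℝ)
    (hq : ∀ θ u w, q θ u w =
      p θ u w - (∑ w' : Fin n, p θ u w') * (∑ u' : Fin n, p θ u' w))
    (γ : Fin n → Fin n → ℝ)
    (hγ : ∀ u w, γ u w =
      (1 / (n : ℝ)) * ∑ u₂ : Fin n, d u₂ w
      + (1 / (n : ℝ)) * ∑ u₁ : Fin n, d u u₁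
      - (1 / (n : ℝ)) ^ 2 * ∑ u₂ : Fin n, ∑ u₁ : Fin n, d u₂ u₁
      - d u w) :
    ∀ u w : Fin n,
      q 0 u w = 0 ∧ HasDerivAt (fun θ => q θ u w) (-(γ u w) / (n : ℝ) ^ 2) 0 := by
  obtain rfl : p = expSampling d := funext fun θ => funext₂ (hp θ)
  obtain rfl : q = fun θ => bivariateCovariance (expSampling d θ) := funext fun θ => funext₂ (hq θ)
  intro u w
  refine ⟨bivariateCovariance_expSampling_zero d u w, ?_⟩
  convert hasDerivAt_bivariateCovariance_expSampling_zero d u w using 1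
  simp only [hγ, Fintype.card_fin]
  ring

/-- For a semi-metric `d` on `{1,…,n}`, the exponentially sampled bivariate
distribution `p_θ(u,w) = exp(θ d(u,w)) / ∑_{u₁,u₂} exp(θ d(u₁,u₂))` with covariance
`q_θ(u,w) = p_θ(u,w) − p_{U,θ}(u) p_{W,θ}(w)` satisfies `q_0(u,w) = 0` and
`(d/dθ) q_θ(u,w) |_{θ=0} = −γ(u,w)/n²`, where `γ` is the semi-cohesion measure induced
by `d`. -/
theorem gme_exponential_sampling_derivative {n : ℕ}
    (d : Fin n → Fin n → ℝ)
    (hnonneg : ∀ u w, 0 ≤ d u w)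
    (hnull : ∀ u, d u u = 0)
    (hsymm : ∀ u w, d u w = d w u)
    (p : ℝ → Fin n → Fin n → ℝ)
    (hp : ∀ θ u w, p θ u w =
      Real.exp (θ * d u w) / ∑ u₁ : Fin n, ∑ u₂ : Fin n, Real.exp (θ * d u₁ u₂))
    (q : ℝ → Fin n → Fin n → ℝ)
    (hq : ∀ θ u w, q θ u w =
      p θ u w - (∑ w' : Fin n, p θ u w') * (∑ u' : Fin n, p θ u' w))
    (γ : Fin n → Fin n → ℝ)
    (hγ : ∀ u w, γ u w =
      (1 / (n : ℝ)) * ∑ u₂ : Fin n, d u₂ w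
      + (1 / (n : ℝ)) * ∑ u₁ : Fin n, d u u₁
      - (1 / (n : ℝ)) ^ 2 * ∑ u₂ : Fin n, ∑ u₁ : Fin n, d u₂ u₁
      - d u w) :
    ∀ u w : Fin n,
      q 0 u w = 0 ∧ HasDerivAt (fun θ => q θ u w) (-(γ u w) / (n : ℝ) ^ 2) 0 :=
  gme_exponential_sampling_derivative_general d p hp q hq γ hγ
end

section
/- Let Q = (q(u,w)) be a real symmetric n×n matrix with q(u,u) = 0 for all u, let θ > 0, and let H be an n×K real matrix whose row u₀ = (h_{u₀,1},…,h_{u₀,K}) is a probability mass function (h_{u₀,k} ≥ 0 and ∑_{k=1}^K h_{u₀,k} = 1). Define z_k = ∑_{w ≠ u₀} q(u₀,w)·h_{w,k} for k = 1,…,K, and let H' be the matrix obtained from H by replacing row u₀ with the softmax update h'_{u₀,k} = e^{θ z_k} h_{u₀,k} / (∑_{ℓ=1}^K e^{θ z_ℓ} h_{u₀,ℓ}), leaving all other rows unchanged. Then the objective does not decrease: tr(H'ᵀ Q H') ≥ tr(Hᵀ Q H); moreover the inequality is strict whenever there exist indices i, j with h_{u₀,i} > 0, h_{u₀,j} > 0,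 and z_i ≠ z_j. Consequently, the objective values produced by repeatedly applying such softmax updates form a monotonically increasing sequence. -/
open Finset Matrix

private lemma sm_aux_nonneg {θ : ℝ} (hθ : 0 < θ) (a b : ℝ) :
    0 ≤ (a - b) * (Real.exp (θ * a) - Real.exp (θ * b)) := by
  rcases le_total a b with h | h
  · have h2 : Real.exp (θ * a) ≤ Real.exp (θ * b) := Real.exp_le_exp.2 (by nlinarith)
    exact mul_nonneg_iff.2 (Or.inr ⟨by linarith, by linarith⟩)
  · apply mul_nonneg (by linarith)
    have : Real.exp (θ * b) ≤ Real.exp (θ * a) := Real.exp_le_exp.2 (by nlinarith)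
    linarith

private lemma sm_aux_pos {θ : ℝ} (hθ : 0 < θ) {a b : ℝ} (hab : a ≠ b) :
    0 < (a - b) * (Real.exp (θ * a) - Real.exp (θ * b)) := by
  rcases lt_or_gt_of_ne hab with h | h
  · apply mul_pos_of_neg_of_neg (by linarith)
    have : Real.exp (θ * a) < Real.exp (θ * b) := Real.exp_lt_exp.2 (by nlinarith)
    linarith
  · apply mul_pos (by linarith)
    have : Real.exp (θ * b) < Real.exp (θ * a) := Real.exp_lt_exp.2 (by nlinarith)
    linarith

/-- One softmax update of the embedding/clustering algorithm does not
decrease the objective `tr(Hᵀ Q H)`: if `Q` is symmetric with zero diagonal, `θ > 0`,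
row `u₀` of `H` is a probability mass function, `z_k = ∑_{w≠u₀} q(u₀,w) h_{w,k}`, and `H'`
replaces row `u₀` by the softmax update `h'_{u₀,k} = e^{θ z_k} h_{u₀,k} / ∑_ℓ e^{θ z_ℓ} h_{u₀,ℓ}`
(other rows unchanged), then `tr(H'ᵀ Q H') ≥ tr(Hᵀ Q H)`, with strict inequality whenever
there are `i, j` with `h_{u₀,i} > 0`, `h_{u₀,j} > 0` and `z_i ≠ z_j`. -/
theorem gme_softmax_update_increases {n K : ℕ}
    (Q : Matrix (Fin n) (Fin n) ℝ) (hsym : Q.IsSymm)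
    (hdiag : ∀ u, Q u u = 0)
    (θ : ℝ) (hθ : 0 < θ)
    (u₀ : Fin n)
    (H : Matrix (Fin n) (Fin K) ℝ)
    (hpmf_nonneg : ∀ k, 0 ≤ H u₀ k)
    (hpmf_sum : ∑ k : Fin K, H u₀ k = 1)
    (z : Fin K → ℝ)
    (hz : ∀ k, z k = ∑ w ∈ Finset.univ.erase u₀, Q u₀ w * H w k)
    (H' : Matrix (Fin n) (Fin K) ℝ)
    (hagree : ∀ w : Fin n, w ≠ u₀ → ∀ k : Fin K, H' w k = H w k)
    (hupdate : ∀ k : Fin K, H' u₀ k =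
      Real.exp (θ * z k) * H u₀ k / (∑ ℓ : Fin K, Real.exp (θ * z ℓ) * H u₀ ℓ)) :
    Matrix.trace (Hᵀ * Q * H) ≤ Matrix.trace (H'ᵀ * Q * H') ∧
    ((∃ i j : Fin K, 0 < H u₀ i ∧ 0 < H u₀ j ∧ z i ≠ z j) →
      Matrix.trace (Hᵀ * Q * H) < Matrix.trace (H'ᵀ * Q * H')) := by
  classical
  set p : Fin K → ℝ := fun k => H u₀ k with hp
  set e : Fin K → ℝ := fun k => Real.exp (θ * z k) with he
  set S : ℝ := ∑ ℓ : Fin K, e ℓ * p ℓ with hS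
  -- S > 0
  have hSpos : 0 < S := by
    have hex : ∃ k, 0 < p k := by
      by_contra hc
      push_neg at hc
      have : ∀ k, p k = 0 := fun k => le_antisymm (hc k) (hpmf_nonneg k)
      simp only [hp] at this
      rw [Finset.sum_congr rfl (fun k _ => this k)] at hpmf_sum
      simp at hpmf_sum
    obtain ⟨k0, hk0⟩ := hex
    apply Finset.sum_pos' (fun k _ => mul_nonneg (Real.exp_pos _).le (hpmf_nonneg k))
    exact ⟨k0, Finset.mem_univ _, mul_pos (Real.exp_pos _) hk0⟩
  set d : Fin K → ℝ := fun k => H' u₀ k - H u₀ k with hd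
  set E : Matrix (Fin n) (Fin K) ℝ := fun w k => if w = u₀ then d k else 0 with hE
  have hH' : H' = H + E := by
    funext w k
    by_cases hw : w = u₀
    · subst hw; show H' w k = H w k + E w k; simp [hE, hd]
    · show H' w k = H w k + E w k; simp [hE, hw, hagree w hw k]
  -- row sums against Q at u₀
  have hcol : ∀ k, ∑ w : Fin n, H w k * Q w u₀ = z k := by
    intro k
    rw [← Finset.sum_erase_add _ _ (Finset.mem_univ u₀), hdiag, mul_zero, add_zero, hz]
    exact Finset.sum_congr rfl fun w hw => by rw [hsym.apply u₀ w]; ring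
  -- trace(Hᵀ Q E) = ∑ z k * d k
  have hTr1 : Matrix.trace (Hᵀ * Q * E) = ∑ k, z k * d k := by
    simp only [Matrix.trace, Matrix.diag, Matrix.mul_apply, Matrix.transpose_apply]
    simp only [hE]
    refine Finset.sum_congr rfl fun k _ => ?_
    rw [Finset.sum_eq_single u₀]
    · simp [hcol k]
    · intro u _ hu; simp [hu]
    · simp
  have hTr2 : Matrix.trace (Eᵀ * Q * H) = ∑ k, z k * d k := by
    have : Eᵀ * Q * H = ((Hᵀ * Q * E))ᵀ := by
      rw [Matrix.transpose_mul, Matrix.transpose_mul, Matrix.transpose_transpose, hsym.eq,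
        Matrix.mul_assoc]
    rw [this, Matrix.trace_transpose, hTr1]
  have hTr3 : Matrix.trace (Eᵀ * Q * E) = 0 := by
    simp only [Matrix.trace, Matrix.diag, Matrix.mul_apply, Matrix.transpose_apply]
    simp only [hE]
    refine Finset.sum_eq_zero fun k _ => ?_
    rw [Finset.sum_eq_single u₀]
    · rw [Finset.sum_eq_single u₀]
      · simp [hdiag]
      · intro u _ hu; simp [hu]
      · simp
    · intro u _ hu; simp [hu]
    · simp
  have hsplit : Matrix.trace (H'ᵀ * Q * H') =
      Matrix.trace (Hᵀ * Q * H) + 2 * ∑ k, z k * d k := by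
    rw [hH']
    rw [Matrix.transpose_add, Matrix.add_mul, Matrix.add_mul, Matrix.mul_add, Matrix.mul_add,
      Matrix.trace_add, Matrix.trace_add, Matrix.trace_add, hTr1, hTr2, hTr3]
    ring
  -- key sums
  set A : ℝ := ∑ k, z k * (e k * p k) with hA
  set B : ℝ := ∑ k, z k * p k with hB
  have hdk : ∀ k, d k = e k * p k / S - p k := by
    intro k; simp [hd, hupdate k, he, hp, hS]
  have hsum_d : ∑ k, z k * d k = (A - B * S) / S := by
    have : ∀ k, z k * d k = z k * (e k * p k) / S - z k * p k := by
      intro k; rw [hdk k]; field_simp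
    rw [Finset.sum_congr rfl fun k _ => this k, Finset.sum_sub_distrib, ← Finset.sum_div,
      sub_div, hA, hB]
    congr 1
    field_simp
  -- covariance expansion
  set Cov : ℝ := ∑ k, ∑ l, p k * p l * ((z k - z l) * (e k - e l)) with hCov
  have hCovEq : Cov = 2 * (A - B * S) := by
    have expand : ∀ k l : Fin K, p k * p l * ((z k - z l) * (e k - e l)) =
        (z k * (e k * p k)) * p l - (z k * p k) * (e l * p l)
          - (e k * p k) * (z l * p l) + p k * (z l * (e l * p l)) := by
      intro k l; ring
    rw [hCov]
    rw [Finset.sum_congr rfl fun k _ => Finset.sum_congr rfl fun l _ => expand k l]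
    simp only [Finset.sum_add_distrib, Finset.sum_sub_distrib,
      ← Finset.sum_mul, ← Finset.mul_sum]
    have h1 : (∑ l, p l) = 1 := hpmf_sum
    have h2 : (∑ l, e l * p l) = S := rfl
    have h3 : (∑ l, z l * p l) = B := rfl
    rw [h1, h2, h3]
    ring
  have hCov_nonneg : 0 ≤ Cov := by
    apply Finset.sum_nonneg; intro k _
    apply Finset.sum_nonneg; intro l _
    exact mul_nonneg (mul_nonneg (hpmf_nonneg k) (hpmf_nonneg l)) (sm_aux_nonneg hθ _ _)
  constructor
  · rw [hsplit]
    have : 0 ≤ ∑ k, z k * d k := by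
      rw [hsum_d]
      apply div_nonneg _ hSpos.le
      linarith [hCovEq ▸ hCov_nonneg]
    linarith
  · rintro ⟨i, j, hi, hj, hij⟩
    have hCov_pos : 0 < Cov := by
      rw [hCov]
      apply Finset.sum_pos'
      · intro k _
        apply Finset.sum_nonneg; intro l _
        exact mul_nonneg (mul_nonneg (hpmf_nonneg k) (hpmf_nonneg l)) (sm_aux_nonneg hθ _ _)
      · refine ⟨i, Finset.mem_univ _, ?_⟩
        apply Finset.sum_pos'
        · intro l _
          exact mul_nonneg (mul_nonneg (hpmf_nonneg i) (hpmf_nonneg l)) (sm_aux_nonneg hθ _ _)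
        · exact ⟨j, Finset.mem_univ _, mul_pos (mul_pos hi hj) (sm_aux_pos hθ hij)⟩
    rw [hsplit]
    have : 0 < ∑ k, z k * d k := by
      rw [hsum_d]
      apply div_pos _ hSpos
      linarith [hCovEq ▸ hCov_pos]
    linarith
end
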